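/- arXiv:2110.13060 — 5 statements merged into one kernel-verified Lean document; each statement's English description precedes it below -/
import Mathlib

section
/- For any two deterministic time-dependent policies π and π' on a finite-horizon MDP and any initial state s_1 ∈ S, the performance difference identity holds: V^{π'}_1(s_1) − V^{π}_1(s_1) = ∑_{t=1}^{H} ∑_{s∈S} d^{π}_t(s)·(V^{π'}_t(s) − Q^{π'}_t(s, π_t(s))). -/
/-!
Weight the gap `V'_t - V_t` by the occupancy `d_t` of `π`. Expanding `V_t` by the Bellman
equation of `π` and adding and subtracting `Q'_t(·, π_t)`, the weighted gap at time `t` splits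
into the advantage term of time `t` plus the gap at time `t + 1` weighted by `d_{t+1}`, since
`d_{t+1}` is `d_t` pushed forward along `π_t`. Summing over `t` telescopes from
`V'_1(s₁) - V_1(s₁)` at `t = 1` down to `0` at `t = H + 1`.
-/

open Finset

theorem sum_pushforward_mul {S : Type*} [Fintype S] (μ : S → ℝ) (K : S → S → ℝ) (f : S → ℝ) :
    ∑ s', (∑ s, μ s * K s s') * f s' = ∑ s, μ s * ∑ s', K s s' * f s' := by
  simp_rw [sum_mul, mul_sum, mul_assoc]
  exact sum_comm

theorem sum_mul_value_sub_eq {S A : Type*} [Fintype S] (P : S → A → S → ℝ) (R : S → A → ℝ)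
    (a : S → A) (q' : S → A → ℝ) (v v' w w' μ : S → ℝ)
    (hq' : ∀ s b, q' s b = R s b + ∑ s', P s b s' * w' s')
    (hv : ∀ s, v s = R s (a s) + ∑ s', P s (a s) s' * w s') :
    ∑ s, μ s * (v' s - v s) = ∑ s, μ s * (v' s - q' s (a s)) +
      ∑ s', (∑ s, μ s * P s (a s) s') * (w' s' - w s') := by
  rw [sum_pushforward_mul, ← sum_add_distrib]
  refine sum_congr rfl fun s _ => ?_
  rw [hv, hq']
  simp only [mul_sub, sum_sub_distrib]
  ring

theorem performance_difference_general
    {S A : Type*} [Fintype S] [DecidableEq S]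
    (P : S → A → S → ℝ) (R : S → A → ℝ) (H : ℕ)
    (π : ℕ → S → A)
    (Q : ℕ → S → A → ℝ) (V : ℕ → S → ℝ)
    (Q' : ℕ → S → A → ℝ) (V' : ℕ → S → ℝ)
    (hVend : ∀ s, V (H + 1) s = 0)
    (hQ : ∀ t ∈ Finset.Icc 1 H, ∀ s a,
      Q t s a = R s a + ∑ s' : S, P s a s' * V (t + 1) s')
    (hV : ∀ t ∈ Finset.Icc 1 H, ∀ s, V t s = Q t s (π t s))
    (hV'end : ∀ s, V' (H + 1) s = 0)
    (hQ' : ∀ t ∈ Finset.Icc 1 H, ∀ s a,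
      Q' t s a = R s a + ∑ s' : S, P s a s' * V' (t + 1) s')
    (s₁ : S) (d : ℕ → S → ℝ)
    (hd1 : ∀ s, d 1 s = if s = s₁ then 1 else 0)
    (hd : ∀ t ∈ Finset.Icc 1 (H - 1), ∀ s',
      d (t + 1) s' = ∑ s : S, d t s * P s (π t s) s') :
    V' 1 s₁ - V 1 s₁ =
      ∑ t ∈ Finset.Icc 1 H, ∑ s : S, d t s * (V' t s - Q' t s (π t s)) := by
  obtain ⟨gap, hgap⟩ : ∃ gap : ℕ → ℝ, ∀ t, gap t = ∑ s, d t s * (V' t s - V t s) :=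
    ⟨_, fun _ => rfl⟩
  have hfirst : gap 1 = V' 1 s₁ - V 1 s₁ := by simp [hgap, hd1]
  have hlast : gap (H + 1) = 0 := by simp [hgap, hVend, hV'end]
  have hstep : ∀ t ∈ Icc 1 H,
      gap t - gap (t + 1) = ∑ s, d t s * (V' t s - Q' t s (π t s)) := by
    intro t ht
    have hnext : ∑ s', (∑ s, d t s * P s (π t s) s') * (V' (t + 1) s' - V (t + 1) s') =
        gap (t + 1) := by
      rcases (mem_Icc.mp ht).2.lt_or_eq with htH | rfl
      · have ht' : t ∈ Icc 1 (H - 1) := by simp only [mem_Icc] at ht ⊢; omega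
        rw [hgap]
        exact sum_congr rfl fun s' _ => by rw [hd t ht' s']
      · simp [hgap, hVend, hV'end]
    rw [hgap, sum_mul_value_sub_eq P R (π t) (Q' t) (V t) (V' t) (V (t + 1)) (V' (t + 1))
      (d t) (hQ' t ht) (fun s => (hV t ht s).trans (hQ t ht s _)), hnext]
    ring
  calc V' 1 s₁ - V 1 s₁ = gap 1 - gap (H + 1) := by rw [hfirst, hlast, sub_zero]
    _ = ∑ t ∈ Icc 1 H, (gap t - gap (t + 1)) := by
      rw [← Ico_add_one_right_eq_Icc, ← neg_sub, ← sum_Ico_sub gap (by omega),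
        ← sum_neg_distrib]
      simp only [neg_sub]
    _ = ∑ t ∈ Icc 1 H, ∑ s, d t s * (V' t s - Q' t s (π t s)) := sum_congr rfl hstep

/-- **Performance difference identity.** For any two deterministic time-dependent
policies `π` and `π'` on a finite-horizon MDP and any initial state `s₁`,
`V^{π'}_1(s₁) − V^{π}_1(s₁) = ∑_{t=1}^{H} ∑_{s} d^{π}_t(s) · (V^{π'}_t(s) − Q^{π'}_t(s, π_t(s)))`.
The value functions of each policy are characterized by the backward Bellman recursion,
and `d` is the state-occupancy distribution of `π` started at `s₁`. -/
theorem performance_difference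
    {S A : Type*} [Fintype S] [Fintype A] [DecidableEq S]
    (P : S → A → S → ℝ) (R : S → A → ℝ) (H : ℕ)
    (hP0 : ∀ s a s', 0 ≤ P s a s')
    (hP1 : ∀ s a, ∑ s' : S, P s a s' = 1)
    (hR0 : ∀ s a, 0 ≤ R s a) (hR1 : ∀ s a, R s a ≤ 1)
    (π π' : ℕ → S → A)
    (Q : ℕ → S → A → ℝ) (V : ℕ → S → ℝ)
    (Q' : ℕ → S → A → ℝ) (V' : ℕ → S → ℝ)
    (hVend : ∀ s, V (H + 1) s = 0)
    (hQ : ∀ t ∈ Finset.Icc 1 H, ∀ s a,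
      Q t s a = R s a + ∑ s' : S, P s a s' * V (t + 1) s')
    (hV : ∀ t ∈ Finset.Icc 1 H, ∀ s, V t s = Q t s (π t s))
    (hV'end : ∀ s, V' (H + 1) s = 0)
    (hQ' : ∀ t ∈ Finset.Icc 1 H, ∀ s a,
      Q' t s a = R s a + ∑ s' : S, P s a s' * V' (t + 1) s')
    (hV' : ∀ t ∈ Finset.Icc 1 H, ∀ s, V' t s = Q' t s (π' t s))
    (s₁ : S) (d : ℕ → S → ℝ)
    (hd1 : ∀ s, d 1 s = if s = s₁ then 1 else 0)
    (hd : ∀ t ∈ Finset.Icc 1 (H - 1), ∀ s',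
      d (t + 1) s' = ∑ s : S, d t s * P s (π t s) s') :
    V' 1 s₁ - V 1 s₁ =
      ∑ t ∈ Finset.Icc 1 H, ∑ s : S, d t s * (V' t s - Q' t s (π t s)) :=
  performance_difference_general P R H π Q V Q' V' hVend hQ hV hV'end hQ' s₁ d hd1 hd
end

section
/- Suppose the confidence condition holds. Then for every deterministic time-dependent policy π, every t ∈ {1,…,H}, and all (s,a) ∈ S × A, the pessimistic evaluation is a lower bound on the true Q-function: Q̄^π_t(s,a) ≤ Q^π_t(s,a), and consequently V̄^π_t(s) ≤ V^π_t(s) for all t ∈ {1,…,H+1} and s ∈ S. -/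
/-!
Backward induction on `t`. The true values of a policy satisfy `0 ≤ V_t ≤ H + 1 - t`, because
rewards lie in `[0, 1]` and transitions are stochastic. Given `V̄_{t+1} ≤ V_{t+1}`, the pessimistic
backup falls short of the true one by at least `b - (R̂ - R) - (P̂ - P)·V_{t+1}`, and the confidence
condition makes this nonnegative since `|V_{t+1}| ≤ H`.
-/

open Finset

theorem backward_induction_Icc {p : ℕ → Prop} {H : ℕ} (top : p (H + 1))
    (step : ∀ t ∈ Icc 1 H, p (t + 1) → p t) : ∀ t ∈ Icc 1 (H + 1), p t := by
  intro t ht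
  obtain ⟨h1t, htH⟩ := mem_Icc.mp ht
  exact Nat.decreasingInduction' (P := p)
    (fun k hk h1k ih => step k (mem_Icc.mpr ⟨h1t.trans h1k, Nat.le_of_lt_succ hk⟩) ih) htH top

section Sums

variable {ι : Type*} [Fintype ι]

theorem sum_mul_mem_Icc_of_stochastic {k v : ι → ℝ} {c : ℝ} (hk0 : ∀ i, 0 ≤ k i)
    (hk1 : ∑ i, k i = 1) (hv : ∀ i, v i ∈ Set.Icc 0 c) : ∑ i, k i * v i ∈ Set.Icc 0 c := by
  constructor
  · exact sum_nonneg fun i _ => mul_nonneg (hk0 i) (hv i).1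
  · calc ∑ i, k i * v i ≤ ∑ i, k i * c :=
          sum_le_sum fun i _ => mul_le_mul_of_nonneg_left (hv i).2 (hk0 i)
      _ = c := by rw [← sum_mul, hk1, one_mul]

theorem sum_mul_le_mul_sum_abs {d v : ι → ℝ} {c : ℝ} (hv : ∀ i, |v i| ≤ c) :
    ∑ i, d i * v i ≤ c * ∑ i, |d i| := by
  rw [mul_sum]
  refine sum_le_sum fun i _ => ?_
  calc d i * v i ≤ |d i| * |v i| := (le_abs_self _).trans (abs_mul _ _).le
    _ ≤ |d i| * c := mul_le_mul_of_nonneg_left (hv i) (abs_nonneg _)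
    _ = c * |d i| := mul_comm _ _

end Sums

theorem value_mem_Icc_of_backward_recursion {S : Type*} [Fintype S] {H : ℕ}
    {r : ℕ → S → ℝ} {k : ℕ → S → S → ℝ} {V : ℕ → S → ℝ}
    (hr : ∀ t s, r t s ∈ Set.Icc 0 1) (hk0 : ∀ t s s', 0 ≤ k t s s')
    (hk1 : ∀ t s, ∑ s', k t s s' = 1) (hVend : ∀ s, V (H + 1) s = 0)
    (hV : ∀ t ∈ Icc 1 H, ∀ s, V t s = r t s + ∑ s', k t s s' * V (t + 1) s') :
    ∀ t ∈ Icc 1 (H + 1), ∀ s, V t s ∈ Set.Icc 0 ((H : ℝ) + 1 - t) := by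
  refine backward_induction_Icc (fun s => by simp [hVend]) fun t ht ih s => ?_
  have hnext := sum_mul_mem_Icc_of_stochastic (hk0 t s) (hk1 t s) ih
  rw [hV t ht s]
  push_cast at hnext ⊢
  constructor <;> linarith [(hr t s).1, (hr t s).2, hnext.1, hnext.2]

theorem pessimistic_backup_le {S : Type*} [Fintype S] {r rhat b c : ℝ} {p phat v vbar : S → ℝ}
    (hconf : |rhat - r| + c * ∑ s, |phat s - p s| ≤ b) (hphat : ∀ s, 0 ≤ phat s)
    (hv : ∀ s, |v s| ≤ c) (hvbar : ∀ s, vbar s ≤ v s) :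
    rhat - b + ∑ s, phat s * vbar s ≤ r + ∑ s, p s * v s := by
  have hmono : ∑ s, phat s * vbar s ≤ ∑ s, phat s * v s :=
    sum_le_sum fun s _ => mul_le_mul_of_nonneg_left (hvbar s) (hphat s)
  have hshift : ∑ s, phat s * v s - ∑ s, p s * v s ≤ c * ∑ s, |phat s - p s| := by
    rw [← sum_sub_distrib]
    simpa only [sub_mul] using sum_mul_le_mul_sum_abs (d := fun s => phat s - p s) hv
  linarith [le_abs_self (rhat - r)]

theorem pessimistic_evaluation_lower_bound_general
    {S A : Type*} [Fintype S]
    (P : S → A → S → ℝ) (R : S → A → ℝ) (H : ℕ)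
    (hP0 : ∀ s a s', 0 ≤ P s a s')
    (hP1 : ∀ s a, ∑ s' : S, P s a s' = 1)
    (hR0 : ∀ s a, 0 ≤ R s a) (hR1 : ∀ s a, R s a ≤ 1)
    (Phat : S → A → S → ℝ)
    (hPhat0 : ∀ s a s', 0 ≤ Phat s a s')
    (Rhat : S → A → ℝ) (b : S → A → ℝ)
    (hconf : ∀ s a,
      |Rhat s a - R s a| + H * ∑ s' : S, |Phat s a s' - P s a s'| ≤ b s a)
    (π : ℕ → S → A)
    (Q : ℕ → S → A → ℝ) (V : ℕ → S → ℝ)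
    (hVend : ∀ s, V (H + 1) s = 0)
    (hQ : ∀ t ∈ Finset.Icc 1 H, ∀ s a,
      Q t s a = R s a + ∑ s' : S, P s a s' * V (t + 1) s')
    (hV : ∀ t ∈ Finset.Icc 1 H, ∀ s, V t s = Q t s (π t s))
    (Qbar : ℕ → S → A → ℝ) (Vbar : ℕ → S → ℝ)
    (hVbarEnd : ∀ s, Vbar (H + 1) s = 0)
    (hQbar : ∀ t ∈ Finset.Icc 1 H, ∀ s a,
      Qbar t s a = Rhat s a - b s a + ∑ s' : S, Phat s a s' * Vbar (t + 1) s')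
    (hVbar : ∀ t ∈ Finset.Icc 1 H, ∀ s, Vbar t s = Qbar t s (π t s)) :
    (∀ t ∈ Finset.Icc 1 H, ∀ s a, Qbar t s a ≤ Q t s a) ∧
      (∀ t ∈ Finset.Icc 1 (H + 1), ∀ s, Vbar t s ≤ V t s) := by
  have hVmem := value_mem_Icc_of_backward_recursion (fun t s => ⟨hR0 s (π t s), hR1 s (π t s)⟩)
    (fun t s => hP0 s (π t s)) (fun t s => hP1 s (π t s)) hVend
    (fun t ht s => (hV t ht s).trans (hQ t ht s _))
  have hVnext_abs : ∀ t ∈ Icc 1 H, ∀ s, |V (t + 1) s| ≤ H := fun t ht s => by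
    obtain ⟨h1t, htH⟩ := mem_Icc.mp ht
    obtain ⟨h0, hle⟩ := hVmem (t + 1) (mem_Icc.mpr ⟨by omega, by omega⟩) s
    have : (1 : ℝ) ≤ t := by exact_mod_cast h1t
    push_cast at hle
    rw [abs_of_nonneg h0]
    linarith
  have hQstep : ∀ t ∈ Icc 1 H, (∀ s, Vbar (t + 1) s ≤ V (t + 1) s) →
      ∀ s a, Qbar t s a ≤ Q t s a := fun t ht hle s a => by
    rw [hQbar t ht, hQ t ht]
    exact pessimistic_backup_le (hconf s a) (hPhat0 s a) (hVnext_abs t ht) hle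
  have hVle : ∀ t ∈ Icc 1 (H + 1), ∀ s, Vbar t s ≤ V t s :=
    backward_induction_Icc (fun s => by rw [hVend, hVbarEnd]) fun t ht hle s => by
      rw [hV t ht, hVbar t ht]
      exact hQstep t ht hle s _
  exact ⟨fun t ht => hQstep t ht (hVle (t + 1) (mem_Icc.mpr ⟨Nat.le_add_left 1 t, Nat.succ_le_succ (mem_Icc.mp ht).2⟩)),
    hVle⟩

/-- Under the confidence condition, the pessimistic policy evaluation (value iteration
for policy evaluation with reward `R̂ − b` and estimated transitions `P̂`) is a lower
bound on the true Q-function of the policy: `Q̄^π_t(s,a) ≤ Q^π_t(s,a)` for all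
`t ∈ {1,…,H}` and `(s,a)`, and consequently `V̄^π_t(s) ≤ V^π_t(s)` for all
`t ∈ {1,…,H+1}` and `s`. -/
theorem pessimistic_evaluation_lower_bound
    {S A : Type*} [Fintype S] [Fintype A]
    (P : S → A → S → ℝ) (R : S → A → ℝ) (H : ℕ)
    (hP0 : ∀ s a s', 0 ≤ P s a s')
    (hP1 : ∀ s a, ∑ s' : S, P s a s' = 1)
    (hR0 : ∀ s a, 0 ≤ R s a) (hR1 : ∀ s a, R s a ≤ 1)
    (Phat : S → A → S → ℝ)
    (hPhat0 : ∀ s a s', 0 ≤ Phat s a s')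
    (hPhat1 : ∀ s a, ∑ s' : S, Phat s a s' = 1)
    (Rhat : S → A → ℝ) (b : S → A → ℝ)
    (hconf : ∀ s a,
      |Rhat s a - R s a| + H * ∑ s' : S, |Phat s a s' - P s a s'| ≤ b s a)
    (π : ℕ → S → A)
    (Q : ℕ → S → A → ℝ) (V : ℕ → S → ℝ)
    (hVend : ∀ s, V (H + 1) s = 0)
    (hQ : ∀ t ∈ Finset.Icc 1 H, ∀ s a,
      Q t s a = R s a + ∑ s' : S, P s a s' * V (t + 1) s')
    (hV : ∀ t ∈ Finset.Icc 1 H, ∀ s, V t s = Q t s (π t s))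
    (Qbar : ℕ → S → A → ℝ) (Vbar : ℕ → S → ℝ)
    (hVbarEnd : ∀ s, Vbar (H + 1) s = 0)
    (hQbar : ∀ t ∈ Finset.Icc 1 H, ∀ s a,
      Qbar t s a = Rhat s a - b s a + ∑ s' : S, Phat s a s' * Vbar (t + 1) s')
    (hVbar : ∀ t ∈ Finset.Icc 1 H, ∀ s, Vbar t s = Qbar t s (π t s)) :
    (∀ t ∈ Finset.Icc 1 H, ∀ s a, Qbar t s a ≤ Q t s a) ∧
      (∀ t ∈ Finset.Icc 1 (H + 1), ∀ s, Vbar t s ≤ V t s) :=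
  pessimistic_evaluation_lower_bound_general P R H hP0 hP1 hR0 hR1 Phat hPhat0 Rhat b hconf π Q V
    hVend hQ hV Qbar Vbar hVbarEnd hQbar hVbar
end

section
/- Suppose the confidence condition holds. Then for every deterministic time-dependent policy π, every t ∈ {1,…,H}, and all (s,a) ∈ S × A, the optimistic evaluation is an upper bound on the true Q-function: Q̂^π_t(s,a) ≥ Q^π_t(s,a), and consequently V̂^π_t(s) ≥ V^π_t(s) for all t ∈ {1,…,H+1} and s ∈ S. -/
/-! Backward induction on `t`. Since rewards lie in `[0, 1]`, the true values satisfy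
`0 ≤ V_{t+1} ≤ H`, so replacing `P` by `P̂` in the one-step lookahead changes it by at most
`H ∑ |P̂ - P|`, and replacing `R` by `R̂` by at most `|R̂ - R|`; the bonus `b` pays for both.
Monotonicity of the lookahead under the nonnegative `P̂` then propagates `V_{t+1} ≤ V̂_{t+1}`
to `Q_t ≤ Q̂_t`, and hence to `V_t ≤ V̂_t`. -/

open Finset

theorem Nat.forall_mem_Icc_of_succ {p : ℕ → Prop} {H : ℕ} (hlast : p (H + 1))
    (hstep : ∀ t ∈ Icc 1 H, p (t + 1) → p t) : ∀ t ∈ Icc 1 (H + 1), p t := by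
  intro t ht
  rw [mem_Icc] at ht
  exact Nat.decreasingInduction'
    (fun k hk htk => hstep k (mem_Icc.2 ⟨ht.1.trans htk, Nat.le_of_lt_succ hk⟩)) ht.2 hlast

section

variable {ι : Type*} (s : Finset ι)

theorem sum_mul_mem_Icc_of_pmf {p v : ι → ℝ} {c : ℝ} (hp0 : ∀ i ∈ s, 0 ≤ p i)
    (hp1 : ∑ i ∈ s, p i = 1) (hv : ∀ i ∈ s, 0 ≤ v i ∧ v i ≤ c) :
    0 ≤ ∑ i ∈ s, p i * v i ∧ ∑ i ∈ s, p i * v i ≤ c := by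
  refine ⟨sum_nonneg fun i hi => mul_nonneg (hp0 i hi) (hv i hi).1, ?_⟩
  calc ∑ i ∈ s, p i * v i ≤ ∑ i ∈ s, p i * c :=
        sum_le_sum fun i hi => mul_le_mul_of_nonneg_left (hv i hi).2 (hp0 i hi)
    _ = c := by rw [← sum_mul, hp1, one_mul]

theorem sum_mul_le_sum_mul_add_mul_sum_abs_sub {p q v w : ι → ℝ} {c : ℝ}
    (hq : ∀ i ∈ s, 0 ≤ q i) (hv : ∀ i ∈ s, |v i| ≤ c) (hvw : ∀ i ∈ s, v i ≤ w i) :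
    ∑ i ∈ s, p i * v i ≤ ∑ i ∈ s, q i * w i + c * ∑ i ∈ s, |q i - p i| := by
  rw [mul_sum, ← sum_add_distrib]
  refine sum_le_sum fun i hi => ?_
  have hshift : (p i - q i) * v i ≤ |q i - p i| * c :=
    calc (p i - q i) * v i ≤ |(p i - q i) * v i| := le_abs_self _
      _ = |q i - p i| * |v i| := by rw [abs_mul, abs_sub_comm]
      _ ≤ |q i - p i| * c := mul_le_mul_of_nonneg_left (hv i hi) (abs_nonneg _)
  have hmono : q i * v i ≤ q i * w i := mul_le_mul_of_nonneg_left (hvw i hi) (hq i hi)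
  linarith

theorem add_sum_mul_le_of_abs_sub_add_mul_sum_abs_sub_le {r r' β c : ℝ} {p q v w : ι → ℝ}
    (hconf : |r' - r| + c * ∑ i ∈ s, |q i - p i| ≤ β)
    (hq : ∀ i ∈ s, 0 ≤ q i) (hv : ∀ i ∈ s, |v i| ≤ c) (hvw : ∀ i ∈ s, v i ≤ w i) :
    r + ∑ i ∈ s, p i * v i ≤ r' + β + ∑ i ∈ s, q i * w i := by
  have hsum := sum_mul_le_sum_mul_add_mul_sum_abs_sub s (p := p) hq hv hvw
  have hr := neg_abs_le (r' - r)
  linarith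

end

theorem optimistic_evaluation_upper_bound_general
    {S A : Type*} [Fintype S]
    (P : S → A → S → ℝ) (R : S → A → ℝ) (H : ℕ)
    (hP0 : ∀ s a s', 0 ≤ P s a s')
    (hP1 : ∀ s a, ∑ s' : S, P s a s' = 1)
    (hR0 : ∀ s a, 0 ≤ R s a) (hR1 : ∀ s a, R s a ≤ 1)
    (Phat : S → A → S → ℝ)
    (hPhat0 : ∀ s a s', 0 ≤ Phat s a s')
    (Rhat : S → A → ℝ) (b : S → A → ℝ)
    (hconf : ∀ s a,
      |Rhat s a - R s a| + H * ∑ s' : S, |Phat s a s' - P s a s'| ≤ b s a)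
    (π : ℕ → S → A)
    (Q : ℕ → S → A → ℝ) (V : ℕ → S → ℝ)
    (hVend : ∀ s, V (H + 1) s = 0)
    (hQ : ∀ t ∈ Finset.Icc 1 H, ∀ s a,
      Q t s a = R s a + ∑ s' : S, P s a s' * V (t + 1) s')
    (hV : ∀ t ∈ Finset.Icc 1 H, ∀ s, V t s = Q t s (π t s))
    (Qhat : ℕ → S → A → ℝ) (Vhat : ℕ → S → ℝ)
    (hVhatEnd : ∀ s, Vhat (H + 1) s = 0)
    (hQhat : ∀ t ∈ Finset.Icc 1 H, ∀ s a,
      Qhat t s a = Rhat s a + b s a + ∑ s' : S, Phat s a s' * Vhat (t + 1) s')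
    (hVhat : ∀ t ∈ Finset.Icc 1 H, ∀ s, Vhat t s = Qhat t s (π t s)) :
    (∀ t ∈ Finset.Icc 1 H, ∀ s a, Qhat t s a ≥ Q t s a) ∧
      (∀ t ∈ Finset.Icc 1 (H + 1), ∀ s, Vhat t s ≥ V t s) := by
  have hsucc : ∀ t ∈ Icc 1 H, t + 1 ∈ Icc 1 (H + 1) := fun t ht => by
    simp only [mem_Icc] at ht ⊢; omega
  have hVbound : ∀ t ∈ Icc 1 (H + 1), ∀ s, 0 ≤ V t s ∧ V t s ≤ H + 1 - t :=
    Nat.forall_mem_Icc_of_succ (fun s => by simp [hVend]) fun t ht ih s => by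
      obtain ⟨hlo, hhi⟩ := sum_mul_mem_Icc_of_pmf univ (fun s' _ => hP0 s (π t s) s')
        (hP1 s (π t s)) fun s' _ => ih s'
      rw [hV t ht, hQ t ht]
      push_cast at hhi
      exact ⟨by linarith [hR0 s (π t s)], by linarith [hR1 s (π t s)]⟩
  have hQle : ∀ t ∈ Icc 1 H, (∀ s, V (t + 1) s ≤ Vhat (t + 1) s) →
      ∀ s a, Q t s a ≤ Qhat t s a := fun t ht hle s a => by
    rw [hQ t ht, hQhat t ht]
    refine add_sum_mul_le_of_abs_sub_add_mul_sum_abs_sub_le univ (hconf s a)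
      (fun s' _ => hPhat0 s a s') (fun s' _ => ?_) fun s' _ => hle s'
    obtain ⟨hlo, hhi⟩ := hVbound (t + 1) (hsucc t ht) s'
    push_cast at hhi
    exact abs_le.2 ⟨by linarith, by linarith⟩
  have hVle : ∀ t ∈ Icc 1 (H + 1), ∀ s, V t s ≤ Vhat t s :=
    Nat.forall_mem_Icc_of_succ (fun s => by simp [hVend, hVhatEnd]) fun t ht ih s => by
      rw [hV t ht, hVhat t ht]
      exact hQle t ht ih s (π t s)
  exact ⟨fun t ht => hQle t ht (hVle (t + 1) (hsucc t ht)), hVle⟩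

/-- Under the confidence condition, the optimistic policy evaluation (value iteration
for policy evaluation with reward `R̂ + b` and estimated transitions `P̂`) is an upper
bound on the true Q-function of the policy: `Q̂^π_t(s,a) ≥ Q^π_t(s,a)` for all
`t ∈ {1,…,H}` and `(s,a)`, and consequently `V̂^π_t(s) ≥ V^π_t(s)` for all
`t ∈ {1,…,H+1}` and `s`. -/
theorem optimistic_evaluation_upper_bound
    {S A : Type*} [Fintype S] [Fintype A]
    (P : S → A → S → ℝ) (R : S → A → ℝ) (H : ℕ)
    (hP0 : ∀ s a s', 0 ≤ P s a s')
    (hP1 : ∀ s a, ∑ s' : S, P s a s' = 1)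
    (hR0 : ∀ s a, 0 ≤ R s a) (hR1 : ∀ s a, R s a ≤ 1)
    (Phat : S → A → S → ℝ)
    (hPhat0 : ∀ s a s', 0 ≤ Phat s a s')
    (hPhat1 : ∀ s a, ∑ s' : S, Phat s a s' = 1)
    (Rhat : S → A → ℝ) (b : S → A → ℝ)
    (hconf : ∀ s a,
      |Rhat s a - R s a| + H * ∑ s' : S, |Phat s a s' - P s a s'| ≤ b s a)
    (π : ℕ → S → A)
    (Q : ℕ → S → A → ℝ) (V : ℕ → S → ℝ)
    (hVend : ∀ s, V (H + 1) s = 0)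
    (hQ : ∀ t ∈ Finset.Icc 1 H, ∀ s a,
      Q t s a = R s a + ∑ s' : S, P s a s' * V (t + 1) s')
    (hV : ∀ t ∈ Finset.Icc 1 H, ∀ s, V t s = Q t s (π t s))
    (Qhat : ℕ → S → A → ℝ) (Vhat : ℕ → S → ℝ)
    (hVhatEnd : ∀ s, Vhat (H + 1) s = 0)
    (hQhat : ∀ t ∈ Finset.Icc 1 H, ∀ s a,
      Qhat t s a = Rhat s a + b s a + ∑ s' : S, Phat s a s' * Vhat (t + 1) s')
    (hVhat : ∀ t ∈ Finset.Icc 1 H, ∀ s, Vhat t s = Qhat t s (π t s)) :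
    (∀ t ∈ Finset.Icc 1 H, ∀ s a, Qhat t s a ≥ Q t s a) ∧
      (∀ t ∈ Finset.Icc 1 (H + 1), ∀ s, Vhat t s ≥ V t s) :=
  optimistic_evaluation_upper_bound_general P R H hP0 hP1 hR0 hR1 Phat hPhat0 Rhat b hconf π Q V
    hVend hQ hV Qhat Vhat hVhatEnd hQhat hVhat
end

section
/- Suppose b(s,a) ≥ 0 for all (s,a) ∈ S × A, and let π̄ be any greedy policy of pessimistic value iteration, i.e. π̄_t(s) ∈ argmax_{a∈A} Q̄*_t(s,a) for all t, s. Then the optimistic evaluation of π̄ dominates the pessimistic Q-values: for all t ∈ {1,…,H}, s ∈ S, and a ∈ A, V̂^{π̄}_t(s) ≥ Q̄*_t(s,a). -/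
open Finset

/- The optimistic evaluation of the greedy policy `π̄` adds the bonus where pessimistic value
iteration subtracts it, and both propagate next-stage values through the same nonnegative
kernel; so backward induction from the zero terminal values gives `V̄*_t ≤ V̂^{π̄}_t`, and
`Q̄*_t(s,a) ≤ V̄*_t(s)` because `V̄*_t` is a maximum over actions. -/

theorem add_sum_mul_le_add_sum_mul {S : Type*} [Fintype S] {p V W : S → ℝ} {r r' : ℝ}
    (hp : 0 ≤ p) (hr : r ≤ r') (hVW : V ≤ W) :
    r + ∑ s, p s * V s ≤ r' + ∑ s, p s * W s :=
  add_le_add hr (sum_le_sum fun s _ => mul_le_mul_of_nonneg_left (hVW s) (hp s))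

theorem pessimistic_value_le_optimistic_value {S A : Type*} [Fintype S]
    (Phat : S → A → S → ℝ) (hPhat0 : ∀ s a s', 0 ≤ Phat s a s')
    (Rhat b : S → A → ℝ) (H : ℕ) (hb : ∀ s a, 0 ≤ b s a)
    (Qbar : ℕ → S → A → ℝ) (Vbar : ℕ → S → ℝ) (hVbarEnd : ∀ s, Vbar (H + 1) s = 0)
    (hQbar : ∀ t ∈ Icc 1 H, ∀ s a,
      Qbar t s a = Rhat s a - b s a + ∑ s' : S, Phat s a s' * Vbar (t + 1) s')
    (πbar : ℕ → S → A) (hgreedy : ∀ t ∈ Icc 1 H, ∀ s, Qbar t s (πbar t s) = Vbar t s)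
    (Qhat : ℕ → S → A → ℝ) (Vhat : ℕ → S → ℝ) (hVhatEnd : ∀ s, Vhat (H + 1) s = 0)
    (hQhat : ∀ t ∈ Icc 1 H, ∀ s a,
      Qhat t s a = Rhat s a + b s a + ∑ s' : S, Phat s a s' * Vhat (t + 1) s')
    (hVhat : ∀ t ∈ Icc 1 H, ∀ s, Vhat t s = Qhat t s (πbar t s))
    {t : ℕ} (ht : 1 ≤ t) (htH : t ≤ H + 1) : Vbar t ≤ Vhat t := by
  induction htH using Nat.decreasingInduction with
  | self => exact fun s => (hVbarEnd s).trans (hVhatEnd s).symm |>.le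
  | of_succ t htH ih =>
    have htIcc : t ∈ Icc 1 H := mem_Icc.mpr ⟨ht, by omega⟩
    intro s
    calc Vbar t s = Qbar t s (πbar t s) := (hgreedy t htIcc s).symm
      _ = Rhat s (πbar t s) - b s (πbar t s)
            + ∑ s', Phat s (πbar t s) s' * Vbar (t + 1) s' := hQbar t htIcc s _
      _ ≤ Rhat s (πbar t s) + b s (πbar t s)
            + ∑ s', Phat s (πbar t s) s' * Vhat (t + 1) s' :=
        add_sum_mul_le_add_sum_mul (hPhat0 s _) (by linarith [hb s (πbar t s)])
          (ih (by omega))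
      _ = Vhat t s := by rw [hVhat t htIcc, hQhat t htIcc]

theorem optimistic_evaluation_dominates_pessimistic_general
    {S A : Type*} [Fintype S] [Fintype A] [Nonempty A]
    (Phat : S → A → S → ℝ)
    (hPhat0 : ∀ s a s', 0 ≤ Phat s a s')
    (Rhat : S → A → ℝ) (b : S → A → ℝ) (H : ℕ)
    (hb : ∀ s a, 0 ≤ b s a)
    (Qbar : ℕ → S → A → ℝ) (Vbar : ℕ → S → ℝ)
    (hVbarEnd : ∀ s, Vbar (H + 1) s = 0)
    (hQbar : ∀ t ∈ Finset.Icc 1 H, ∀ s a,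
      Qbar t s a = Rhat s a - b s a + ∑ s' : S, Phat s a s' * Vbar (t + 1) s')
    (hVbar : ∀ t ∈ Finset.Icc 1 H, ∀ s,
      Vbar t s = Finset.univ.sup' Finset.univ_nonempty (fun a => Qbar t s a))
    (πbar : ℕ → S → A)
    (hgreedy : ∀ t ∈ Finset.Icc 1 H, ∀ s, Qbar t s (πbar t s) = Vbar t s)
    (Qhat : ℕ → S → A → ℝ) (Vhat : ℕ → S → ℝ)
    (hVhatEnd : ∀ s, Vhat (H + 1) s = 0)
    (hQhat : ∀ t ∈ Finset.Icc 1 H, ∀ s a,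
      Qhat t s a = Rhat s a + b s a + ∑ s' : S, Phat s a s' * Vhat (t + 1) s')
    (hVhat : ∀ t ∈ Finset.Icc 1 H, ∀ s, Vhat t s = Qhat t s (πbar t s)) :
    ∀ t ∈ Finset.Icc 1 H, ∀ s a, Vhat t s ≥ Qbar t s a := by
  intro t ht s a
  obtain ⟨ht1, htH⟩ := mem_Icc.mp ht
  calc Qbar t s a ≤ Vbar t s := hVbar t ht s ▸ le_sup' (fun a => Qbar t s a) (mem_univ a)
    _ ≤ Vhat t s :=
      pessimistic_value_le_optimistic_value Phat hPhat0 Rhat b H hb Qbar Vbar hVbarEnd hQbar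
        πbar hgreedy Qhat Vhat hVhatEnd hQhat hVhat ht1 (by omega) s

/-- If the bonus is nonnegative and `π̄` is a greedy policy of pessimistic value
iteration, then the optimistic evaluation of `π̄` dominates the pessimistic Q-values:
`V̂^{π̄}_t(s) ≥ Q̄*_t(s,a)` for all `t ∈ {1,…,H}`, `s ∈ S`, `a ∈ A`. -/
theorem optimistic_evaluation_dominates_pessimistic
    {S A : Type*} [Fintype S] [Fintype A] [Nonempty A]
    (Phat : S → A → S → ℝ)
    (hPhat0 : ∀ s a s', 0 ≤ Phat s a s')
    (hPhat1 : ∀ s a, ∑ s' : S, Phat s a s' = 1)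
    (Rhat : S → A → ℝ) (b : S → A → ℝ) (H : ℕ)
    (hb : ∀ s a, 0 ≤ b s a)
    (Qbar : ℕ → S → A → ℝ) (Vbar : ℕ → S → ℝ)
    (hVbarEnd : ∀ s, Vbar (H + 1) s = 0)
    (hQbar : ∀ t ∈ Finset.Icc 1 H, ∀ s a,
      Qbar t s a = Rhat s a - b s a + ∑ s' : S, Phat s a s' * Vbar (t + 1) s')
    (hVbar : ∀ t ∈ Finset.Icc 1 H, ∀ s,
      Vbar t s = Finset.univ.sup' Finset.univ_nonempty (fun a => Qbar t s a))
    (πbar : ℕ → S → A)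
    (hgreedy : ∀ t ∈ Finset.Icc 1 H, ∀ s, Qbar t s (πbar t s) = Vbar t s)
    (Qhat : ℕ → S → A → ℝ) (Vhat : ℕ → S → ℝ)
    (hVhatEnd : ∀ s, Vhat (H + 1) s = 0)
    (hQhat : ∀ t ∈ Finset.Icc 1 H, ∀ s a,
      Qhat t s a = Rhat s a + b s a + ∑ s' : S, Phat s a s' * Vhat (t + 1) s')
    (hVhat : ∀ t ∈ Finset.Icc 1 H, ∀ s, Vhat t s = Qhat t s (πbar t s)) :
    ∀ t ∈ Finset.Icc 1 H, ∀ s a, Vhat t s ≥ Qbar t s a :=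
  optimistic_evaluation_dominates_pessimistic_general Phat hPhat0 Rhat b H hb Qbar Vbar hVbarEnd
    hQbar hVbar πbar hgreedy Qhat Vhat hVhatEnd hQhat hVhat
end

section
/- Let ι be a finite set and f : ι → ℕ. Then ∑_{i∈ι} ∑_{n=1}^{f(i)} 1/√n ≤ 2·√(|ι| · ∑_{i∈ι} f(i)). -/
/-!
Since `1 / √(n + 1) ≤ 2 (√(n + 1) - √n)`, the inner sums telescope to `∑_{n ≤ N} 1/√n ≤ 2√N`.
Cauchy–Schwarz then gives `∑_i √(f i) ≤ √(|ι| · ∑_i f i)`.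
-/

open Finset

namespace Real

theorem one_div_sqrt_add_one_le {x : ℝ} (hx : 0 ≤ x) :
    1 / √(x + 1) ≤ 2 * (√(x + 1) - √x) := by
  have hb : 0 < √(x + 1) := sqrt_pos.2 (by linarith)
  have ha2 : √x ^ 2 = x := sq_sqrt hx
  have hb2 : √(x + 1) ^ 2 = x + 1 := sq_sqrt (by linarith)
  rw [div_le_iff₀ hb]
  nlinarith [sq_nonneg (√(x + 1) - √x)]

theorem sum_Icc_one_div_sqrt_le (N : ℕ) :
    ∑ n ∈ Icc 1 N, 1 / √n ≤ 2 * √N := by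
  induction N with
  | zero => simp
  | succ N ih =>
    rw [sum_Icc_succ_top (by omega), Nat.cast_succ]
    linarith [one_div_sqrt_add_one_le (Nat.cast_nonneg (α := ℝ) N)]

theorem sum_sqrt_le_sqrt_card_mul_sum {ι : Type*} (s : Finset ι) {g : ι → ℝ}
    (hg : ∀ i, 0 ≤ g i) : ∑ i ∈ s, √(g i) ≤ √(#s * ∑ i ∈ s, g i) := by
  simpa [sqrt_mul (Nat.cast_nonneg _)] using
    sum_sqrt_mul_sqrt_le s (f := fun _ ↦ 1) (fun _ ↦ zero_le_one) hg

end Real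

/-- For a finite index set `ι` and visit counts `f : ι → ℕ`,
`∑_{i ∈ ι} ∑_{n=1}^{f(i)} 1/√n ≤ 2·√(|ι| · ∑_{i∈ι} f(i))`. -/
theorem sum_inv_sqrt_le
    {ι : Type*} [Fintype ι] (f : ι → ℕ) :
    ∑ i : ι, ∑ n ∈ Finset.Icc 1 (f i), (1 : ℝ) / Real.sqrt n ≤
      2 * Real.sqrt ((Fintype.card ι : ℝ) * ∑ i : ι, (f i : ℝ)) :=
  calc ∑ i : ι, ∑ n ∈ Icc 1 (f i), (1 : ℝ) / √n
      ≤ ∑ i : ι, 2 * √(f i) := sum_le_sum fun i _ ↦ Real.sum_Icc_one_div_sqrt_le (f i)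
    _ = 2 * ∑ i : ι, √(f i) := (mul_sum ..).symm
    _ ≤ 2 * √(Fintype.card ι * ∑ i : ι, (f i : ℝ)) := by
      gcongr
      simpa using Real.sum_sqrt_le_sqrt_card_mul_sum univ fun i ↦ Nat.cast_nonneg (f i)
end
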